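/- Rank-reducing RTT=TTR relation for n = 2: for all a, b ∈ {0,1,2} and i, j ∈ {0,1}, ∑_{a',b'=0}^{1} R^{(1)}(y/x)^{a',b'}_{i,j} T(y)_{b'b} T(x)_{a'a} = ∑_{i',j'=0}^{2} T(x)_{ii'} T(y)_{jj'} R^{(2)}(y/x)^{a,b}_{i',j'}, where R^{(1)} is the 2-dimensional (n=1) ASEP R matrix, R^{(2)} is the 3-dimensional (n=2) ASEP R matrix, and T(z)_{00}=1, T(z)_{01}=z k, T(z)_{02}=z a⁻, T(z)_{10}=a⁺, T(z)_{11}=0, T(z)_{12}=z. -/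

import Mathlib

/-!
Since `R(z)^{a,b}_{c,d}` vanishes unless `{a, b} = {c, d}`, each side of the relation collapses
to at most two terms. Writing `y = z x` and moving every oscillator word into the normal order
`a⁺ k a⁻` with the defining relations, each of the 36 entries becomes a comparison of
coefficients that are rational functions in `z` with denominator `1 - t z`.
-/

/-- The ASEP R matrix: `Rmat t z a b c d = R(z)^{a,b}_{c,d}`. -/
def Rmat {K : Type*} [DivisionRing K] {n : ℕ} (t z : K) (a b c d : Fin (n + 1)) : K :=
  if a = c ∧ b = d then
    (if c = d then 1 else (1 - z) * t ^ (if c < d then 1 else 0) / (1 - t * z))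
  else if a = d ∧ b = c then (1 - t) * z ^ (if d < c then 1 else 0) / (1 - t * z)
  else 0

/-- The `n = 2` operator `T(z)` with a single t-oscillator. -/
def Tmat {K : Type*} [Field K] {A : Type*} [Ring A] [Algebra K A]
    (ap am k : A) (z : K) : Fin 2 → Fin 3 → A :=
  ![![1, z • k, z • am], ![ap, 0, z • (1 : A)]]

section RmatSums

variable {K : Type*} [DivisionRing K] {M : Type*} [AddCommMonoid M] [Module K M] {n : ℕ}

theorem Rmat_eq_zero (t z : K) {a b c d : Fin (n + 1)} (h : ¬(a = c ∧ b = d))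
    (h' : ¬(a = d ∧ b = c)) : Rmat t z a b c d = 0 := by
  simp [Rmat, h, h']

theorem Rmat_self (t z : K) (a : Fin (n + 1)) : Rmat t z a a a a = 1 := by
  simp [Rmat]

theorem sum_Rmat_smul_lower (t z : K) (i j : Fin (n + 1)) (f : Fin (n + 1) → Fin (n + 1) → M) :
    ∑ a', ∑ b', Rmat t z a' b' i j • f a' b' =
      if i = j then f i i else Rmat t z i j i j • f i j + Rmat t z j i i j • f j i := by
  rw [← Fintype.sum_prod_type' (f := fun a' b' => Rmat t z a' b' i j • f a' b')]
  split_ifs with hij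
  · subst hij
    rw [Fintype.sum_eq_single (i, i), Rmat_self, one_smul]
    rintro ⟨a', b'⟩ hne
    rw [Rmat_eq_zero, zero_smul] <;> grind
  · rw [Fintype.sum_eq_add (i, j) (j, i) (by grind)]
    rintro ⟨a', b'⟩ hne
    rw [Rmat_eq_zero, zero_smul] <;> grind

theorem sum_Rmat_smul_upper (t z : K) (a b : Fin (n + 1)) (f : Fin (n + 1) → Fin (n + 1) → M) :
    ∑ i', ∑ j', Rmat t z a b i' j' • f i' j' =
      if a = b then f a a else Rmat t z a b a b • f a b + Rmat t z a b b a • f b a := by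
  rw [← Fintype.sum_prod_type' (f := fun i' j' => Rmat t z a b i' j' • f i' j')]
  split_ifs with hab
  · subst hab
    rw [Fintype.sum_eq_single (a, a), Rmat_self, one_smul]
    rintro ⟨i', j'⟩ hne
    rw [Rmat_eq_zero, zero_smul] <;> grind
  · rw [Fintype.sum_eq_add (a, b) (b, a) (by grind)]
    rintro ⟨i', j'⟩ hne
    rw [Rmat_eq_zero, zero_smul] <;> grind

end RmatSums

/-- Rank-reducing `RTT = TTR` relation for `n = 2`: for all `a, b ∈ {0,1,2}`,
`i, j ∈ {0,1}`,
`∑_{a',b'=0}^{1} R⁽¹⁾(y/x)^{a',b'}_{i,j} T(y)_{b'b} T(x)_{a'a}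
  = ∑_{i',j'=0}^{2} T(x)_{ii'} T(y)_{jj'} R⁽²⁾(y/x)^{a,b}_{i',j'}`. -/
theorem stmt15 {K : Type*} [Field K] {A : Type*} [Ring A] [Algebra K A]
    (t x y : K) (ap am k : A)
    (hx : x ≠ 0) (hd : 1 - t * (y / x) ≠ 0)
    (h1 : k * ap = t • (ap * k)) (h2 : t • (k * am) = am * k)
    (h3 : am * ap = 1 - t • k) (h4 : ap * am = 1 - k) :
    ∀ (a b : Fin 3) (i j : Fin 2),
      ∑ a' : Fin 2, ∑ b' : Fin 2,
        Rmat t (y / x) a' b' i j • (Tmat ap am k y b' b * Tmat ap am k x a' a)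
      = ∑ i' : Fin 3, ∑ j' : Fin 3,
          Rmat t (y / x) a b i' j' • (Tmat ap am k x i i' * Tmat ap am k y j j') := by
  obtain ⟨z, rfl⟩ : ∃ z, y = z * x := ⟨y / x, (div_mul_cancel₀ y hx).symm⟩
  rw [mul_div_cancel_right₀ z hx]
  -- `match_scalars` below writes the denominator as `1 - z * t`
  rw [mul_div_cancel_right₀ z hx, mul_comm t z] at hd
  intro a b i j
  rw [sum_Rmat_smul_lower, sum_Rmat_smul_upper]
  fin_cases a <;> fin_cases b <;> fin_cases i <;> fin_cases j <;>
    simp only [Tmat, Rmat, Fin.isValue, Fin.reduceFinMk, Fin.reduceEq, Fin.reduceLT, ↓reduceIte,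
      and_self, Matrix.cons_val, Matrix.cons_val_fin_one, Matrix.cons_val_one,
      Matrix.cons_val_zero, pow_one, pow_zero, mul_one] <;>
    simp only [smul_mul_assoc, mul_smul_comm, smul_smul, one_mul, mul_one, zero_mul, mul_zero,
      smul_zero, add_zero, zero_add, h1, ← h2, h3, h4] <;>
    match_scalars <;> field_simp <;> ring
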